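/- arXiv:2502.10698 — 2 statements merged into one kernel-verified Lean document; each statement's English description precedes it below -/
import Mathlib

section
/- Let T, m, n be natural numbers and for each task i = 1,…,T let r_i be a natural number, with unit vectors u_i^(k) ∈ ℝ^m, vectors v_i^(k) ∈ ℝ^n, positive reals σ_i^(k), and reals α_i^(k) for k = 1,…,r_i. Define M(α) = Σ_{i=1}^T Σ_{k=1}^{r_i} α_i^(k) u_i^(k) v_i^(k)ᵀ. Then α solves the linear system (U ∘ V) α = σ, where U_{(i,k),(i',k')} = ⟨u_i^(k), u_{i'}^(k')⟩ and V_{(i,k),(i',k')} = ⟨v_{i'}^(k'), v_i^(k)⟩, if and only if the superposition objective ⟨σ_i^(k) u_i^(k), M(α) v_i^(k) − σ_i^(k) u_i^(k)⟩ = 0 holds for every pair (i,k). -/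
open Matrix RealInnerProductSpace

/-- with unit vectors `u_i^(k)` and positive `σ_i^(k)`, `α` solves
`(U ∘ V) α = σ` iff the superposition objective
`⟨σ_i^(k) u_i^(k), M(α) v_i^(k) − σ_i^(k) u_i^(k)⟩ = 0` holds for every pair `(i,k)`. -/
theorem stf_system_iff_objective (T m n : ℕ) (r : Fin T → ℕ)
    (u : ∀ i : Fin T, Fin (r i) → EuclideanSpace ℝ (Fin m))
    (v : ∀ i : Fin T, Fin (r i) → EuclideanSpace ℝ (Fin n))
    (hu : ∀ (i : Fin T) (k : Fin (r i)), ‖u i k‖ = 1)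
    (σ : ∀ i : Fin T, Fin (r i) → ℝ)
    (hσ : ∀ (i : Fin T) (k : Fin (r i)), 0 < σ i k)
    (α : ∀ i : Fin T, Fin (r i) → ℝ)
    (M : Matrix (Fin m) (Fin n) ℝ)
    (hM : M = ∑ i, ∑ k, α i k • Matrix.vecMulVec (u i k) (v i k))
    (U V : Matrix ((i : Fin T) × Fin (r i)) ((i : Fin T) × Fin (r i)) ℝ)
    (hU : ∀ p q, U p q = ⟪u p.1 p.2, u q.1 q.2⟫)
    (hV : ∀ p q, V p q = ⟪v q.1 q.2, v p.1 p.2⟫) :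
    (Matrix.hadamard U V) *ᵥ (fun p : (i : Fin T) × Fin (r i) => α p.1 p.2)
        = (fun p : (i : Fin T) × Fin (r i) => σ p.1 p.2) ↔
      ∀ (i : Fin T) (k : Fin (r i)),
        ⟪σ i k • u i k,
          (WithLp.equiv 2 (Fin m → ℝ)).symm (M *ᵥ v i k) - σ i k • u i k⟫ = 0 := by
  -- key identity: for each (i,k), ((U∘V) *ᵥ α) (i,k) = ⟪u i k, M *ᵥ v i k⟫
  have key : ∀ (i : Fin T) (k : Fin (r i)),
      ((Matrix.hadamard U V) *ᵥ (fun p : (i : Fin T) × Fin (r i) => α p.1 p.2)) ⟨i, k⟩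
        = ⟪u i k, (WithLp.equiv 2 (Fin m → ℝ)).symm (M *ᵥ v i k)⟫ := by
    intro i k
    have hMv : M *ᵥ (v i k : Fin n → ℝ) = ∑ i', ∑ k',
        (α i' k' * ⟪v i' k', v i k⟫) • (WithLp.equiv 2 (Fin m → ℝ) (u i' k')) := by
      subst hM
      funext j
      simp only [Matrix.mulVec, dotProduct, Matrix.sum_apply, Matrix.smul_apply,
        Matrix.vecMulVec_apply, smul_eq_mul, PiLp.inner_apply, RCLike.inner_apply,
        conj_trivial, Finset.sum_apply, Pi.smul_apply, Finset.sum_mul, Finset.mul_sum,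
        Finset.sum_smul, Finset.smul_sum]
      rw [Finset.sum_comm]
      refine Finset.sum_congr rfl fun i' _ => ?_
      rw [Finset.sum_comm]
      refine Finset.sum_congr rfl fun k' _ => ?_
      refine Finset.sum_congr rfl fun l _ => ?_
      rw [WithLp.equiv_apply]
      ring
    have hMv' : (WithLp.equiv 2 (Fin m → ℝ)).symm (M *ᵥ v i k) = ∑ i', ∑ k',
        (α i' k' * ⟪v i' k', v i k⟫) • u i' k' := by
      rw [hMv]; ext j; simp
    rw [hMv']
    simp only [inner_sum, real_inner_smul_right]
    show ∑ x : (i : Fin T) × Fin (r i),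
        Matrix.hadamard U V ⟨i, k⟩ x * α x.1 x.2 = _
    rw [← Finset.univ_sigma_univ, Finset.sum_sigma]
    refine Finset.sum_congr rfl fun i' _ => Finset.sum_congr rfl fun k' _ => ?_
    rw [Matrix.hadamard_apply, hU, hV]
    ring
  have hun : ∀ (i : Fin T) (k : Fin (r i)), ⟪u i k, u i k⟫ = (1 : ℝ) := by
    intro i k
    rw [real_inner_self_eq_norm_sq, hu]; norm_num
  rw [funext_iff]
  constructor
  · intro h i k
    have hh := h ⟨i, k⟩
    rw [key i k] at hh
    rw [inner_sub_right, real_inner_smul_left, real_inner_smul_left, real_inner_smul_right,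
      hun, hh]
    ring
  · intro h p
    obtain ⟨i, k⟩ := p
    have hh := h i k
    rw [inner_sub_right, real_inner_smul_left, real_inner_smul_left, real_inner_smul_right,
      hun, mul_one] at hh
    have h2 : σ i k * ⟪u i k, (WithLp.equiv 2 (Fin m → ℝ)).symm (M *ᵥ v i k)⟫
        = σ i k * σ i k := by linarith
    have := mul_left_cancel₀ (ne_of_gt (hσ i k)) h2
    rw [key i k, this]
end

section
/- Let T, m, n be natural numbers and for each task i = 1,…,T let r_i be a natural number, with orthonormal families u_i^(1),…,u_i^(r_i) ∈ ℝ^m and v_i^(1),…,v_i^(r_i) ∈ ℝ^n and reals σ_i^(k), and set M_i = Σ_{k=1}^{r_i} σ_i^(k) u_i^(k) v_i^(k)ᵀ. If α = (α_i^(k)) solves (U ∘ V) α = σ, where U_{(i,k),(i',k')} = ⟨u_i^(k), u_{i'}^(k')⟩ and V_{(i,k),(i',k')} = ⟨v_{i'}^(k'), v_i^(k)⟩ and σ = (σ_i^(k)), then the merged matrix M(α) = Σ_{i=1}^T Σ_{k=1}^{r_i} α_i^(k) u_i^(k) v_i^(k)ᵀ preserves each task's features in the sense that ⟨u_i^(k),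 M(α) v_i^(k)⟩ = ⟨u_i^(k), M_i v_i^(k)⟩ for every pair (i,k). -/
open Matrix RealInnerProductSpace

lemma mysum_mulVec {ι : Type*} {m n : ℕ} (s : Finset ι) (A : ι → Matrix (Fin m) (Fin n) ℝ)
    (y : Fin n → ℝ) : (∑ i ∈ s, A i) *ᵥ y = ∑ i ∈ s, A i *ᵥ y := by
  ext j
  simp [mulVec, dotProduct, Matrix.sum_apply, Finset.sum_mul, Finset.sum_apply]
  rw [Finset.sum_comm]

lemma mydot_sum {ι : Type*} {m : ℕ} (s : Finset ι) (x : Fin m → ℝ) (f : ι → Fin m → ℝ) :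
    x ⬝ᵥ ∑ i ∈ s, f i = ∑ i ∈ s, x ⬝ᵥ f i := by
  simp [dotProduct, Finset.mul_sum, Finset.sum_apply]
  rw [Finset.sum_comm]

lemma mydot_smul_vecMulVec {m n : ℕ} (c : ℝ) (x a : Fin m → ℝ) (b y : Fin n → ℝ) :
    x ⬝ᵥ ((c • vecMulVec a b) *ᵥ y) = c * (x ⬝ᵥ a) * (b ⬝ᵥ y) := by
  simp [mulVec, dotProduct, vecMulVec_apply, Finset.mul_sum, Finset.sum_mul]
  rw [Finset.sum_comm]
  apply Finset.sum_congr rfl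
  intro j _
  apply Finset.sum_congr rfl
  intro l _
  ring

/-- if `α` solves `(U ∘ V) α = σ`, then the merged matrix
`M(α) = Σ_i Σ_k α_i^(k) u_i^(k) v_i^(k)ᵀ` preserves each task's features:
`⟨u_i^(k), M(α) v_i^(k)⟩ = ⟨u_i^(k), M_i v_i^(k)⟩` for every pair `(i,k)`. -/
theorem stf_preserves_task_features (T m n : ℕ) (r : Fin T → ℕ)
    (u : ∀ i : Fin T, Fin (r i) → EuclideanSpace ℝ (Fin m))
    (v : ∀ i : Fin T, Fin (r i) → EuclideanSpace ℝ (Fin n))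
    (hu : ∀ i : Fin T, Orthonormal ℝ (u i)) (hv : ∀ i : Fin T, Orthonormal ℝ (v i))
    (σ α : ∀ i : Fin T, Fin (r i) → ℝ)
    (Mi : ∀ _ : Fin T, Matrix (Fin m) (Fin n) ℝ)
    (hMi : ∀ i, Mi i = ∑ k, σ i k • Matrix.vecMulVec (u i k) (v i k))
    (M : Matrix (Fin m) (Fin n) ℝ)
    (hM : M = ∑ i, ∑ k, α i k • Matrix.vecMulVec (u i k) (v i k))
    (U V : Matrix ((i : Fin T) × Fin (r i)) ((i : Fin T) × Fin (r i)) ℝ)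
    (hU : ∀ p q, U p q = ⟪u p.1 p.2, u q.1 q.2⟫)
    (hV : ∀ p q, V p q = ⟪v q.1 q.2, v p.1 p.2⟫)
    (hα : (Matrix.hadamard U V) *ᵥ (fun p : (i : Fin T) × Fin (r i) => α p.1 p.2)
        = fun p : (i : Fin T) × Fin (r i) => σ p.1 p.2) :
    ∀ (i : Fin T) (k : Fin (r i)),
      ⟪u i k, (WithLp.equiv 2 (Fin m → ℝ)).symm (M *ᵥ v i k)⟫
        = ⟪u i k, (WithLp.equiv 2 (Fin m → ℝ)).symm (Mi i *ᵥ v i k)⟫ := by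
  intro i k
  have hd : ∀ w : Fin m → ℝ, ⟪u i k, (WithLp.equiv 2 (Fin m → ℝ)).symm w⟫
      = (fun t => u i k t) ⬝ᵥ w := by
    intro w
    simp [PiLp.inner_apply, dotProduct, mul_comm]
  have hipu : ∀ (j : Fin T) (l : Fin (r j)),
      ⟪u i k, u j l⟫ = (fun t => u i k t) ⬝ᵥ (fun t => u j l t) := by
    intro j l; simp [PiLp.inner_apply, dotProduct, mul_comm]
  have hipv : ∀ (j : Fin T) (l : Fin (r j)),
      ⟪v j l, v i k⟫ = (fun t => v j l t) ⬝ᵥ (fun t => v i k t) := by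
    intro j l; simp [PiLp.inner_apply, dotProduct, mul_comm]
  -- LHS
  have hL : ⟪u i k, (WithLp.equiv 2 (Fin m → ℝ)).symm (M *ᵥ v i k)⟫
      = ∑ j, ∑ l, (⟪u i k, u j l⟫ * ⟪v j l, v i k⟫) * α j l := by
    rw [hd, hM]
    simp only [mysum_mulVec, mydot_sum, mydot_smul_vecMulVec]
    apply Finset.sum_congr rfl
    intro j _
    apply Finset.sum_congr rfl
    intro l _
    rw [hipu, hipv]
    ring
  -- RHS
  have hR : ⟪u i k, (WithLp.equiv 2 (Fin m → ℝ)).symm (Mi i *ᵥ v i k)⟫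
      = ∑ l, (⟪u i k, u i l⟫ * ⟪v i l, v i k⟫) * σ i l := by
    rw [hd, hMi i]
    simp only [mysum_mulVec, mydot_sum, mydot_smul_vecMulVec]
    apply Finset.sum_congr rfl
    intro l _
    rw [hipu, hipv]
    ring
  have key := congrFun hα ⟨i, k⟩
  simp only [mulVec, dotProduct, hadamard_apply, hU, hV] at key
  rw [← Finset.univ_sigma_univ, Finset.sum_sigma] at key
  rw [hL, hR, key]
  rw [Finset.sum_eq_single k]
  · simp [orthonormal_iff_ite.mp (hu i) k k, orthonormal_iff_ite.mp (hv i) k k, (hu i).1 k, (hv i).1 k]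
  · intro l _ hlk
    simp [orthonormal_iff_ite.mp (hu i) k l, hlk.symm]
  · simp
end
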